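/- arXiv:0706.3218 — 3 statements merged into one kernel-verified Lean document; each statement's English description precedes it below -/
import Mathlib

section
/- For every n ≥ 1 and every g ∈ F, the difference l_n(g) − l_∞(g) is a nonnegative even integer; that is, l_n(g) ≥ l_∞(g) and l_n(g) ≡ l_∞(g) (mod 2). -/
/-- The defining relations of Thompson's group `F` in the infinite presentation
`⟨x_k, k ≥ 0 | x_i⁻¹ x_j x_i = x_{j+1} for i < j⟩`. -/
def thompsonRels : Set (FreeGroup ℕ) :=
  {w | ∃ i j : ℕ, i < j ∧
    w = (FreeGroup.of i)⁻¹ * FreeGroup.of j * FreeGroup.of i * (FreeGroup.of (j + 1))⁻¹}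

/-- Thompson's group `F`. -/
abbrev ThompsonF := PresentedGroup thompsonRels

/-- The standard infinite family of generators `x_i` of Thompson's group `F`. -/
def x (i : ℕ) : ThompsonF := PresentedGroup.of i

/-- The word length of `g` with respect to a generating set `S`:
the least `m` such that `g` is a product of `m` elements of `S ∪ S⁻¹`. -/
noncomputable def wordLength {G : Type*} [Group G] (S : Set G) (g : G) : ℕ :=
  sInf {m | ∃ l : List G, l.length = m ∧ (∀ a ∈ l, a ∈ S ∨ a⁻¹ ∈ S) ∧ l.prod = g}

/-- The consecutive generating set `X_n = {x_0, x_1, …, x_n}`. -/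
def Xset (n : ℕ) : Set ThompsonF := {g | ∃ i ≤ n, g = x i}

/-- `l_n(g)`: word length of `g` with respect to `X_n`. -/
noncomputable def ln (n : ℕ) (g : ThompsonF) : ℕ := wordLength (Xset n) g

/-- `l_∞(g)`: word length of `g` with respect to the infinite generating set `{x_i | i ≥ 0}`. -/
noncomputable def linf (g : ThompsonF) : ℕ := wordLength (Set.range x) g

/-- The word metric `d_n(g,h) = l_n(g⁻¹ h)`. -/
noncomputable def dn (n : ℕ) (g h : ThompsonF) : ℕ := ln n (g⁻¹ * h)

/-!
Both `X_n` (for `n ≥ 1`, via `x_{k+1} = x_0⁻¹ x_k x_0`) and `{x_i}` generate `F`, and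
`X_n ⊆ {x_i}`, so a geodesic word over `X_n` is a word over `{x_i}`: this gives
`l_∞ ≤ l_n`. For parity, all relators have exponent sum zero, so the exponent sum
`F → ℤ` is a homomorphism, and it is congruent mod 2 to the length of any word in
the `x_i^{±1}` representing `g`; hence `l_n(g) ≡ l_∞(g) (mod 2)`.
-/

section WordLength

variable {G : Type*} [Group G] {S T : Set G} {g : G}

theorem exists_list_of_mem_closure (hg : g ∈ Subgroup.closure S) :
    ∃ l : List G, (∀ a ∈ l, a ∈ S ∨ a⁻¹ ∈ S) ∧ l.prod = g := by
  rw [← Subgroup.mem_toSubmonoid, Subgroup.closure_toSubmonoid] at hg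
  exact Submonoid.exists_list_of_mem_closure hg

theorem exists_list_length_eq_wordLength (hg : g ∈ Subgroup.closure S) :
    ∃ l : List G, l.length = wordLength S g ∧ (∀ a ∈ l, a ∈ S ∨ a⁻¹ ∈ S) ∧ l.prod = g := by
  obtain ⟨l, hl, rfl⟩ := exists_list_of_mem_closure hg
  exact Nat.sInf_mem (s := {m | ∃ l' : List G, l'.length = m ∧ (∀ a ∈ l', a ∈ S ∨ a⁻¹ ∈ S) ∧
    l'.prod = l.prod}) ⟨l.length, l, rfl, hl, rfl⟩

theorem wordLength_le_length {l : List G} (hl : ∀ a ∈ l, a ∈ S ∨ a⁻¹ ∈ S) :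
    wordLength S l.prod ≤ l.length :=
  Nat.sInf_le ⟨l, rfl, hl, rfl⟩

theorem wordLength_le_of_subset (hST : S ⊆ T) (hg : g ∈ Subgroup.closure S) :
    wordLength T g ≤ wordLength S g := by
  obtain ⟨l, hlen, hl, rfl⟩ := exists_list_length_eq_wordLength hg
  rw [← hlen]
  exact wordLength_le_length fun a ha => (hl a ha).imp (@hST _) (@hST _)

/-- Each letter `s^{±1}` contributes `±1 ≡ 1 (mod 2)`. -/
theorem cast_length_eq_toAdd_prod (φ : G →* Multiplicative ℤ)
    (hφ : ∀ s ∈ S, φ s = Multiplicative.ofAdd 1) {l : List G}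
    (hl : ∀ a ∈ l, a ∈ S ∨ a⁻¹ ∈ S) :
    (l.length : ZMod 2) = ((φ l.prod).toAdd : ZMod 2) := by
  induction l with
  | nil => simp
  | cons a l ih =>
    have ha : ((φ a).toAdd : ZMod 2) = 1 := by
      rcases hl a List.mem_cons_self with ha | ha
      · simp [hφ a ha]
      · rw [← inv_inv a, map_inv, hφ _ ha]
        decide
    simp only [List.length_cons, List.prod_cons, map_mul, toAdd_mul, Nat.cast_succ,
      Int.cast_add, ha, ih fun b hb => hl b (List.mem_cons_of_mem a hb)]
    ring

theorem cast_wordLength_eq_toAdd (φ : G →* Multiplicative ℤ)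
    (hφ : ∀ s ∈ S, φ s = Multiplicative.ofAdd 1) (hg : g ∈ Subgroup.closure S) :
    (wordLength S g : ZMod 2) = ((φ g).toAdd : ZMod 2) := by
  obtain ⟨l, hlen, hl, rfl⟩ := exists_list_length_eq_wordLength hg
  rw [← hlen, cast_length_eq_toAdd_prod φ hφ hl]

end WordLength

theorem x_inv_mul_mul {i j : ℕ} (h : i < j) : (x i)⁻¹ * x j * x i = x (j + 1) := by
  have := PresentedGroup.one_of_mem (rels := thompsonRels) ⟨i, j, h, rfl⟩
  simp only [map_mul, map_inv] at this
  exact mul_inv_eq_one.mp this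

theorem x_mem_closure_Xset {n : ℕ} (hn : 1 ≤ n) (j : ℕ) : x j ∈ Subgroup.closure (Xset n) := by
  induction j using Nat.strong_induction_on with
  | _ j ih =>
    rcases le_or_gt j n with hj | hj
    · exact Subgroup.subset_closure ⟨j, hj, rfl⟩
    · obtain ⟨k, rfl⟩ : ∃ k, j = k + 1 := ⟨j - 1, by omega⟩
      rw [← x_inv_mul_mul (by omega : 0 < k)]
      have hx₀ := ih 0 (by omega)
      exact mul_mem (mul_mem (inv_mem hx₀) (ih k (by omega))) hx₀

theorem closure_Xset {n : ℕ} (hn : 1 ≤ n) : Subgroup.closure (Xset n) = ⊤ := by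
  rw [eq_top_iff, ← PresentedGroup.closure_range_of, Subgroup.closure_le]
  rintro _ ⟨i, rfl⟩
  exact x_mem_closure_Xset hn i

theorem Xset_subset_range_x (n : ℕ) : Xset n ⊆ Set.range x := by
  rintro _ ⟨i, -, rfl⟩
  exact ⟨i, rfl⟩

noncomputable def expSum : ThompsonF →* Multiplicative ℤ :=
  PresentedGroup.toGroup (f := fun _ => Multiplicative.ofAdd 1) (by
    rintro _ ⟨i, j, -, rfl⟩
    simp)

theorem expSum_x (i : ℕ) : expSum (x i) = Multiplicative.ofAdd 1 :=
  PresentedGroup.toGroup.of _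

theorem ln_sub_linf_nonneg_even (n : ℕ) (hn : 1 ≤ n) (g : ThompsonF) :
    linf g ≤ ln n g ∧ ln n g % 2 = linf g % 2 := by
  have hg : g ∈ Subgroup.closure (Xset n) := closure_Xset hn ▸ Subgroup.mem_top g
  have hexpSum : ∀ s ∈ Set.range x, expSum s = Multiplicative.ofAdd 1 := by
    rintro _ ⟨i, rfl⟩
    exact expSum_x i
  refine ⟨wordLength_le_of_subset (Xset_subset_range_x n) hg, ?_⟩
  rw [← ZMod.natCast_eq_natCast_iff', ln, linf,
    cast_wordLength_eq_toAdd expSum (fun s hs => hexpSum s (Xset_subset_range_x n hs)) hg,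
    cast_wordLength_eq_toAdd expSum hexpSum (Subgroup.closure_mono (Xset_subset_range_x n) hg)]
end

section
/- For every n ≥ 1, the word length of the generator x_{2n} of Thompson's group F with respect to the generating set X_n = {x_0, x_1, …, x_n} is exactly 2n + 1, i.e., l_n(x_{2n}) = 2n + 1. -/
/-!
Let `F` act on `ℚ × ℤ`, with `x_i` acting on the first coordinate by the piecewise-linear map
that fixes `(-∞, i]`, has slope `1/2` on `[i, i + 2]` and translates `[i + 2, ∞)` by `-1`, and on
the second coordinate by adding the log₂ of its left slope. For `i ≤ n` a generator of `X_n`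
moves the first coordinate by at most `1`, and lowers the second coordinate only at points
`≤ n + 2`, which it sends to points `≤ n + 1`. Since `x_{2n}` sends `(2n + 2, 0)` to
`(2n + 1, -1)`, any word in `X_n` representing it must walk from `2n + 2` down to `n + 2`, spend
one letter there, and walk back from `n + 1` up to `2n + 1`: at least `2n + 1` letters.
The word `x_0^{-n} x_n x_0^n` shows this is attained.
-/

section WordLength

variable {G : Type*} [Group G] {S : Set G} {g : G}

theorem wordLength_le {l : List G} (hl : ∀ a ∈ l, a ∈ S ∨ a⁻¹ ∈ S) (hg : l.prod = g) :
    wordLength S g ≤ l.length :=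
  Nat.sInf_le ⟨l, rfl, hl, hg⟩

theorem le_wordLength {k : ℕ} (hg : ∃ l : List G, (∀ a ∈ l, a ∈ S ∨ a⁻¹ ∈ S) ∧ l.prod = g)
    (hk : ∀ l : List G, (∀ a ∈ l, a ∈ S ∨ a⁻¹ ∈ S) → l.prod = g → k ≤ l.length) :
    k ≤ wordLength S g := by
  obtain ⟨l, hl, hg⟩ := hg
  refine le_csInf ⟨_, l, rfl, hl, hg⟩ ?_
  rintro _ ⟨l, rfl, hl, hg⟩
  exact hk l hl hg

end WordLength

theorem x_inv_mul_x_mul_x {i j : ℕ} (hij : i < j) : (x i)⁻¹ * x j * x i = x (j + 1) :=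
  PresentedGroup.mk_eq_mk_of_mul_inv_mem ⟨i, j, hij, rfl⟩

theorem x_inv_pow_mul_x_mul_x_pow {i j : ℕ} (hij : i < j) (k : ℕ) :
    (x i)⁻¹ ^ k * x j * x i ^ k = x (j + k) := by
  induction k generalizing j with
  | zero => simp
  | succ k ih =>
    calc (x i)⁻¹ ^ (k + 1) * x j * x i ^ (k + 1)
        = (x i)⁻¹ ^ k * ((x i)⁻¹ * x j * x i) * x i ^ k := by group
      _ = x (j + (k + 1)) := by
        rw [x_inv_mul_x_mul_x hij, ih (by omega), add_right_comm, add_assoc]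

theorem exists_word_x_two_mul {n : ℕ} (hn : 1 ≤ n) :
    ∃ l : List ThompsonF, l.length = 2 * n + 1 ∧ (∀ a ∈ l, a ∈ Xset n ∨ a⁻¹ ∈ Xset n) ∧
      l.prod = x (2 * n) := by
  refine ⟨List.replicate n (x 0)⁻¹ ++ x n :: List.replicate n (x 0), by simp; omega, ?_, ?_⟩
  · intro a ha
    simp only [List.mem_append, List.mem_cons, List.mem_replicate] at ha
    rcases ha with ⟨-, rfl⟩ | rfl | ⟨-, rfl⟩
    · exact .inr ⟨0, n.zero_le, inv_inv _⟩
    · exact .inl ⟨n, le_rfl, rfl⟩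
    · exact .inl ⟨0, n.zero_le, rfl⟩
  · rw [List.prod_append, List.prod_cons, List.prod_replicate, List.prod_replicate, ← mul_assoc,
      x_inv_pow_mul_x_mul_x_pow hn, two_mul]

section Descent

def MovesFstAtMostOne (σ : Equiv.Perm (ℚ × ℤ)) : Prop :=
  ∀ p, |(σ p).1 - p.1| ≤ 1

def LowersSndOnlyBelow (a b : ℚ) (σ : Equiv.Perm (ℚ × ℤ)) : Prop :=
  ∀ p, (σ p).2 < p.2 → p.1 ≤ a ∧ (σ p).1 ≤ b

variable {L : List (Equiv.Perm (ℚ × ℤ))}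

theorem abs_fst_list_prod_sub_le (hL : ∀ σ ∈ L, MovesFstAtMostOne σ) (p : ℚ × ℤ) :
    |(L.prod p).1 - p.1| ≤ L.length := by
  induction L with
  | nil => simp
  | cons σ L ih =>
    have hstep := hL σ List.mem_cons_self (L.prod p)
    have hrest := ih fun τ hτ => hL τ (List.mem_cons_of_mem σ hτ)
    rw [List.prod_cons, Equiv.Perm.mul_apply, List.length_cons, Nat.cast_succ]
    linarith [abs_sub_le (σ (L.prod p)).1 (L.prod p).1 p.1]

theorem le_length_of_snd_list_prod_lt {a b : ℚ} (hmove : ∀ σ ∈ L, MovesFstAtMostOne σ)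
    (hlower : ∀ σ ∈ L, LowersSndOnlyBelow a b σ) {p : ℚ × ℤ} (hp : (L.prod p).2 < p.2) :
    (p.1 - a) + ((L.prod p).1 - b) + 1 ≤ L.length := by
  induction L with
  | nil => simp at hp
  | cons σ L ih =>
    have hmove' := fun τ hτ => hmove τ (List.mem_cons_of_mem σ hτ)
    have hlower' := fun τ hτ => hlower τ (List.mem_cons_of_mem σ hτ)
    set q := L.prod p
    rw [List.prod_cons, Equiv.Perm.mul_apply] at hp ⊢
    rw [List.length_cons, Nat.cast_succ]
    rcases lt_or_ge (σ q).2 q.2 with hσ | hσ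
    · obtain ⟨hq, hσq⟩ := hlower σ List.mem_cons_self q hσ
      have := abs_le.mp (abs_fst_list_prod_sub_le hmove' p)
      linarith
    · have := ih hmove' hlower' (hσ.trans_lt hp)
      have := abs_le.mp (hmove σ List.mem_cons_self q)
      linarith

end Descent

def plMap (i : ℕ) (t : ℚ) : ℚ := if t ≤ i then t else if t ≤ i + 2 then (t + i) / 2 else t - 1

def plMapInv (i : ℕ) (t : ℚ) : ℚ := if t ≤ i then t else if t ≤ i + 1 then 2 * t - i else t + 1

/-- `log₂` of the left slope of `plMap i` at `t`; `logSlope_comp` is the chain rule for it. -/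
def logSlope (i : ℕ) (t : ℚ) : ℤ := if t ≤ i then 0 else if t ≤ i + 2 then -1 else 0

def logSlopeInv (i : ℕ) (t : ℚ) : ℤ := if t ≤ i then 0 else if t ≤ i + 1 then 1 else 0

def genPerm (i : ℕ) : Equiv.Perm (ℚ × ℤ) where
  toFun p := (plMap i p.1, p.2 + logSlope i p.1)
  invFun p := (plMapInv i p.1, p.2 + logSlopeInv i p.1)
  left_inv := by
    rintro ⟨t, e⟩
    simp only [plMap, plMapInv, logSlope, logSlopeInv, Prod.mk.injEq]
    split_ifs <;> constructor <;> linarith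
  right_inv := by
    rintro ⟨t, e⟩
    simp only [plMap, plMapInv, logSlope, logSlopeInv, Prod.mk.injEq]
    split_ifs <;> constructor <;> linarith

theorem genPerm_apply (i : ℕ) (p : ℚ × ℤ) : genPerm i p = (plMap i p.1, p.2 + logSlope i p.1) :=
  rfl

theorem genPerm_inv_apply (i : ℕ) (p : ℚ × ℤ) :
    (genPerm i)⁻¹ p = (plMapInv i p.1, p.2 + logSlopeInv i p.1) :=
  rfl

theorem plMap_comp {i j : ℕ} (hij : i < j) (t : ℚ) :
    plMap j (plMap i t) = plMap i (plMap (j + 1) t) := by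
  have : (i : ℚ) + 1 ≤ j := by exact_mod_cast hij
  unfold plMap
  push_cast
  split_ifs <;> linarith

theorem logSlope_comp {i j : ℕ} (hij : i < j) (t : ℚ) :
    logSlope i t + logSlope j (plMap i t) = logSlope (j + 1) t + logSlope i (plMap (j + 1) t) := by
  have : (i : ℚ) + 1 ≤ j := by exact_mod_cast hij
  unfold plMap logSlope
  push_cast
  split_ifs <;> first | rfl | linarith

theorem genPerm_mul_genPerm {i j : ℕ} (hij : i < j) :
    genPerm j * genPerm i = genPerm i * genPerm (j + 1) := by
  ext ⟨t, e⟩ <;> simp only [Equiv.Perm.mul_apply, genPerm_apply]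
  · exact plMap_comp hij t
  · linarith [logSlope_comp hij t]

theorem genPerm_thompsonRels : ∀ r ∈ thompsonRels, FreeGroup.lift genPerm r = 1 := by
  rintro _ ⟨i, j, hij, rfl⟩
  simp only [map_mul, map_inv, FreeGroup.lift_apply_of]
  rw [mul_assoc _ (genPerm j), genPerm_mul_genPerm hij]
  group

noncomputable def thompsonAction : ThompsonF →* Equiv.Perm (ℚ × ℤ) :=
  PresentedGroup.toGroup genPerm_thompsonRels

theorem thompsonAction_x (i : ℕ) : thompsonAction (x i) = genPerm i :=
  PresentedGroup.toGroup.of genPerm_thompsonRels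

theorem movesFstAtMostOne_genPerm (i : ℕ) : MovesFstAtMostOne (genPerm i) := by
  rintro ⟨t, e⟩
  simp only [genPerm_apply, plMap, abs_le]
  split_ifs <;> constructor <;> linarith

theorem movesFstAtMostOne_genPerm_inv (i : ℕ) : MovesFstAtMostOne (genPerm i)⁻¹ := by
  rintro ⟨t, e⟩
  simp only [genPerm_inv_apply, plMapInv, abs_le]
  split_ifs <;> constructor <;> linarith

theorem lowersSndOnlyBelow_genPerm {i n : ℕ} (hi : i ≤ n) :
    LowersSndOnlyBelow (n + 2) (n + 1) (genPerm i) := by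
  have : (i : ℚ) ≤ n := by exact_mod_cast hi
  rintro ⟨t, e⟩
  simp only [genPerm_apply, plMap, logSlope]
  split_ifs <;> intro h <;> first | omega | constructor <;> linarith

theorem lowersSndOnlyBelow_genPerm_inv {a b : ℚ} (i : ℕ) :
    LowersSndOnlyBelow a b (genPerm i)⁻¹ := by
  rintro ⟨t, e⟩
  simp only [genPerm_inv_apply, logSlopeInv]
  split_ifs <;> omega

theorem genPerm_two_mul (n : ℕ) :
    genPerm (2 * n) ((2 * n + 2 : ℚ), 0) = ((2 * n + 1 : ℚ), -1) := by
  simp only [genPerm_apply, plMap, logSlope]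
  push_cast
  split_ifs <;> first | linarith | (simp only [Prod.mk.injEq]; constructor <;> ring)

theorem two_mul_add_one_le_length {n : ℕ} {l : List ThompsonF}
    (hl : ∀ a ∈ l, a ∈ Xset n ∨ a⁻¹ ∈ Xset n) (hprod : l.prod = x (2 * n)) :
    2 * n + 1 ≤ l.length := by
  set L := l.map thompsonAction
  have hgen : ∀ σ ∈ L, ∃ i ≤ n, σ = genPerm i ∨ σ = (genPerm i)⁻¹ := by
    simp only [L, List.mem_map]
    rintro _ ⟨a, ha, rfl⟩
    rcases hl a ha with ⟨i, hi, rfl⟩ | ⟨i, hi, ha⟩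
    · exact ⟨i, hi, .inl (thompsonAction_x i)⟩
    · exact ⟨i, hi, .inr (by rw [← thompsonAction_x, ← ha, map_inv, inv_inv])⟩
  have hmove : ∀ σ ∈ L, MovesFstAtMostOne σ := by
    intro σ hσ
    obtain ⟨i, -, rfl | rfl⟩ := hgen σ hσ
    exacts [movesFstAtMostOne_genPerm i, movesFstAtMostOne_genPerm_inv i]
  have hlower : ∀ σ ∈ L, LowersSndOnlyBelow (n + 2) (n + 1) σ := by
    intro σ hσ
    obtain ⟨i, hi, rfl | rfl⟩ := hgen σ hσ
    exacts [lowersSndOnlyBelow_genPerm hi, lowersSndOnlyBelow_genPerm_inv i]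
  have hL : L.prod = genPerm (2 * n) := by
    rw [← map_list_prod, hprod, thompsonAction_x]
  have key := le_length_of_snd_list_prod_lt hmove hlower (p := ((2 * n + 2 : ℚ), 0))
    (by rw [hL, genPerm_two_mul]; norm_num)
  rw [hL, genPerm_two_mul, List.length_map] at key
  exact_mod_cast (by linarith : (2 * n + 1 : ℚ) ≤ l.length)

theorem length_x2n (n : ℕ) (hn : 1 ≤ n) : ln n (x (2 * n)) = 2 * n + 1 := by
  obtain ⟨l, hlen, hl, hprod⟩ := exists_word_x_two_mul hn
  refine le_antisymm (hlen ▸ wordLength_le hl hprod) ?_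
  exact le_wordLength ⟨l, hl, hprod⟩ fun _ => two_mul_add_one_le_length
end

section
/- For every n ≥ 1, the element α = x_{2n−1}⁻¹ x_{2n−2}⁻¹ ⋯ x_2⁻¹ x_1⁻¹ of Thompson's group F has word length exactly 4n − 3 with respect to the generating set X_n = {x_0, x_1, …, x_n}, i.e., l_n(α) = 4n − 3. -/
/-!
Realise `F` by piecewise-linear homeomorphisms of `ℝ`: `x_i` fixes `(-∞, i]`, halves slopes on
`[i, i + 2]` and is translation by `-1` beyond, so `x_i⁻¹` has slope at most `2` and moves
points by at most `1`. Near `2`, `α` acts with slope `2 ^ (2n - 1)` and sends `2` to `2n + 1`.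
Follow a tiny interval ending at `2` through a word for `α` in `X_n`: an inverse letter either
hits the interval below `i + 1`, where it may double its length but leaves its right end below
`n + 3`, or it acts as a translation, pushing the right end up by `1` without stretching.
So `2n - 1` inverse letters are needed for the slope and `n - 1` more for the displacement.
Since `α` has exponent sum `-(2n - 1)`, a word with at least `3n - 2` inverse letters has length
at least `2(3n - 2) - (2n - 1) = 4n - 3`; the word
`x_{n-1}^{-(n-1)} (x_n⁻¹ x_{n-1})^{n-1} x_n⁻¹ x_{n-1}⁻¹ ⋯ x_1⁻¹` attains this length.
-/

theorem wordLength_eq_of_forall_le {G : Type*} [Group G] {S : Set G} {g : G} (l : List G)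
    (hS : ∀ a ∈ l, a ∈ S ∨ a⁻¹ ∈ S) (hg : l.prod = g)
    (hmin : ∀ l' : List G, (∀ a ∈ l', a ∈ S ∨ a⁻¹ ∈ S) → l'.prod = g → l.length ≤ l'.length) :
    wordLength S g = l.length :=
  IsLeast.csInf_eq ⟨⟨l, rfl, hS, hg⟩, by rintro _ ⟨l', rfl, hS', hg'⟩; exact hmin l' hS' hg'⟩

namespace ThompsonF

theorem x_inv_mul_x_mul_x {i j : ℕ} (h : i < j) : (x i)⁻¹ * x j * x i = x (j + 1) := by
  simpa [x, PresentedGroup.of] using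
    PresentedGroup.mk_eq_mk_of_mul_inv_mem (rels := thompsonRels) ⟨i, j, h, rfl⟩

theorem inv_x_add_one_add (i k : ℕ) :
    (x (i + 1 + k))⁻¹ = (x i)⁻¹ ^ k * (x (i + 1))⁻¹ * x i ^ k := by
  induction k with
  | zero => simp
  | succ k ih =>
    rw [← add_assoc, ← x_inv_mul_x_mul_x (by omega : i < i + 1 + k), mul_inv_rev, mul_inv_rev,
      inv_inv, ih, pow_succ' (x i)⁻¹, pow_succ (x i)]
    simp only [mul_assoc]

def alphaWord (k : ℕ) : List ThompsonF := (List.range k).map fun i => (x (k - i))⁻¹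

theorem alphaWord_prod_succ (k : ℕ) :
    (alphaWord (k + 1)).prod = (x (k + 1))⁻¹ * (alphaWord k).prod := by
  simp [alphaWord, List.range_succ_eq_map, Function.comp_def]

theorem alphaWord_prod_add (m k : ℕ) :
    (alphaWord (m + 1 + k)).prod =
      (x m)⁻¹ ^ k * ((x (m + 1))⁻¹ * x m) ^ k * (x (m + 1))⁻¹ * (alphaWord m).prod := by
  induction k with
  | zero => simp [alphaWord_prod_succ]
  | succ k ih =>
    rw [← add_assoc, alphaWord_prod_succ, ih, add_assoc (m + 1) k 1, inv_x_add_one_add]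
    simp only [pow_succ' _ k, inv_pow, mul_assoc, mul_inv_cancel_left]

def shortWord (m : ℕ) : List ThompsonF :=
  List.replicate m (x m)⁻¹ ++ (List.replicate m [(x (m + 1))⁻¹, x m]).flatten ++
    (x (m + 1))⁻¹ :: alphaWord m

theorem shortWord_length (m : ℕ) : (shortWord m).length = 4 * m + 1 := by
  simp [shortWord, alphaWord, List.length_flatten, List.sum_replicate]
  ring

theorem shortWord_prod (m : ℕ) : (shortWord m).prod = (alphaWord (2 * m + 1)).prod := by
  rw [show 2 * m + 1 = m + 1 + m by ring, alphaWord_prod_add]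
  simp [shortWord, List.prod_flatten, mul_assoc]

theorem shortWord_mem (m : ℕ) :
    ∀ a ∈ shortWord m, a ∈ Xset (m + 1) ∨ a⁻¹ ∈ Xset (m + 1) := by
  have hinv : ∀ i ≤ m + 1, (x i)⁻¹ ∈ Xset (m + 1) ∨ (x i)⁻¹⁻¹ ∈ Xset (m + 1) :=
    fun i hi => .inr ⟨i, hi, inv_inv _⟩
  simp only [shortWord, alphaWord, List.mem_append, List.mem_cons, List.mem_flatten,
    List.mem_replicate, List.mem_map, List.mem_range]
  rintro a ((⟨-, rfl⟩ | ⟨l, ⟨-, rfl⟩, ha⟩) | rfl | ⟨i, hi, rfl⟩)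
  · exact hinv m (by omega)
  · simp only [List.mem_cons, List.not_mem_nil, or_false] at ha
    rcases ha with rfl | rfl
    · exact hinv (m + 1) le_rfl
    · exact .inl ⟨m, by omega, rfl⟩
  · exact hinv (m + 1) le_rfl
  · exact hinv (m - i) (by omega)

noncomputable def expand (i : ℕ) (t : ℝ) : ℝ :=
  if t ≤ i then t else if t ≤ i + 1 then 2 * t - i else t + 1

noncomputable def contract (i : ℕ) (t : ℝ) : ℝ :=
  if t ≤ i then t else if t ≤ i + 2 then (t + i) / 2 else t - 1

theorem contract_expand (i : ℕ) : Function.LeftInverse (contract i) (expand i) := by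
  intro t; unfold expand contract; split_ifs <;> linarith

theorem expand_contract (i : ℕ) : Function.RightInverse (contract i) (expand i) := by
  intro t; unfold expand contract; split_ifs <;> linarith

theorem contract_contract {i j : ℕ} (h : i < j) (t : ℝ) :
    contract j (contract i t) = contract i (contract (j + 1) t) := by
  have hij : (i : ℝ) + 1 ≤ j := by exact_mod_cast h
  unfold contract; push_cast; split_ifs <;> linarith

theorem contract_strictMono (i : ℕ) : StrictMono (contract i) := by
  intro a b hab; unfold contract; split_ifs <;> linarith

theorem contract_le (i : ℕ) (t : ℝ) : contract i t ≤ t := by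
  unfold contract; split_ifs <;> linarith

theorem contract_sub_contract_le (i : ℕ) {a b : ℝ} (hab : a ≤ b) :
    contract i b - contract i a ≤ b - a := by
  unfold contract; split_ifs <;> linarith

theorem expand_strictMono (i : ℕ) : StrictMono (expand i) := by
  intro a b hab; unfold expand; split_ifs <;> linarith

theorem expand_le_add_one (i : ℕ) (t : ℝ) : expand i t ≤ t + 1 := by
  unfold expand; split_ifs <;> linarith

theorem expand_sub_expand_le (i : ℕ) {a b : ℝ} (hab : a ≤ b) :
    expand i b - expand i a ≤ 2 * (b - a) := by
  unfold expand; split_ifs <;> linarith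

theorem expand_of_add_one_le {i : ℕ} {t : ℝ} (h : (i : ℝ) + 1 ≤ t) : expand i t = t + 1 := by
  unfold expand; split_ifs <;> linarith

noncomputable def xPerm (i : ℕ) : Equiv.Perm ℝ :=
  ⟨contract i, expand i, expand_contract i, contract_expand i⟩

noncomputable def rho : ThompsonF →* Equiv.Perm ℝ :=
  PresentedGroup.toGroup (f := xPerm) <| by
    rintro - ⟨i, j, hij, rfl⟩
    simp only [map_mul, map_inv, FreeGroup.lift_apply_of, mul_inv_eq_one]
    rw [mul_assoc, inv_mul_eq_iff_eq_mul]
    ext t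
    exact contract_contract hij t

@[simp]
theorem rho_x_apply (i : ℕ) (t : ℝ) : rho (x i) t = contract i t := by
  simp [rho, x, xPerm]

@[simp]
theorem rho_x_inv_apply (i : ℕ) (t : ℝ) : rho (x i)⁻¹ t = expand i t := by
  simp [rho, x, xPerm]

noncomputable def exponentSum : ThompsonF →* Multiplicative ℤ :=
  PresentedGroup.toGroup (f := fun _ => Multiplicative.ofAdd 1) <| by
    rintro - ⟨i, j, -, rfl⟩
    simp

@[simp]
theorem toAdd_exponentSum_x (i : ℕ) : (exponentSum (x i)).toAdd = 1 := by
  simp [exponentSum, x]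

theorem toAdd_exponentSum_alphaWord_prod (k : ℕ) :
    (exponentSum (alphaWord k).prod).toAdd = -k := by
  induction k with
  | zero => simp [alphaWord]
  | succ k ih => simp [alphaWord_prod_succ, ih]

theorem rho_alphaWord_prod_apply (k : ℕ) {s : ℝ} (hs : 0 ≤ s) (hks : 2 ^ k * s ≤ 1) :
    rho (alphaWord k).prod (2 - s) = k + 2 - 2 ^ k * s := by
  induction k with
  | zero => simp [alphaWord]
  | succ k ih =>
    have hks' : 2 * (2 ^ k * s) ≤ 1 := by rw [pow_succ] at hks; linarith
    have h0 : 0 ≤ 2 ^ k * s := by positivity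
    rw [alphaWord_prod_succ, map_mul, Equiv.Perm.mul_apply, ih (by linarith), rho_x_inv_apply,
      expand]
    push_cast
    rw [if_neg (by linarith), if_pos (by linarith), pow_succ]
    ring

/-- `E` counts the inverse letters of `L` that may stretch the image of `[lo, hi]` and `R` those
that merely translate it; the inequality with `exponentSum` says that `E + R` is at most the number
of inverse letters. -/
theorem exists_stretch_bounds (n : ℕ) {lo hi : ℝ} (hlt : lo < hi) (hhi : hi < n + 3)
    (L : List ThompsonF) (hL : ∀ a ∈ L, a ∈ Xset n ∨ a⁻¹ ∈ Xset n)
    (hsmall : 2 ^ L.length * (hi - lo) < 1) :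
    ∃ E R : ℕ, E ≤ L.length ∧ 2 * (E + R : ℤ) + (exponentSum L.prod).toAdd ≤ L.length ∧
        rho L.prod lo < rho L.prod hi ∧ rho L.prod hi - rho L.prod lo ≤ 2 ^ E * (hi - lo) ∧
        rho L.prod hi < n + 3 + R := by
  induction L with
  | nil => exact ⟨0, 0, by simp [hlt, hhi]⟩
  | cons a L ih =>
    have hsmall' : 2 * (2 ^ L.length * (hi - lo)) < 1 := by
      rw [List.length_cons, pow_succ] at hsmall
      linarith
    obtain ⟨E, R, hE, hsum, hmono, hgap, hval⟩ :=
      ih (fun b hb => hL b (List.mem_cons_of_mem a hb)) (by linarith)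
    set p := rho L.prod lo
    set q := rho L.prod hi
    have hgap' : q - p ≤ 2 ^ L.length * (hi - lo) :=
      hgap.trans (by gcongr; norm_num)
    simp only [List.prod_cons, map_mul, Equiv.Perm.mul_apply, toAdd_mul, List.length_cons,
      Nat.cast_succ]
    rcases hL a List.mem_cons_self with ⟨i, -, rfl⟩ | ⟨i, hin, hai⟩
    · simp only [rho_x_apply, toAdd_exponentSum_x]
      exact ⟨E, R, by omega, by linarith, contract_strictMono i hmono,
        (contract_sub_contract_le i hmono.le).trans hgap, (contract_le i q).trans_lt hval⟩
    · rw [← inv_inv a, hai, rho_x_inv_apply, rho_x_inv_apply, map_inv, toAdd_inv,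
        toAdd_exponentSum_x]
      have hin' : (i : ℝ) ≤ n := by exact_mod_cast hin
      refine (lt_or_ge p (i + 1)).elim (fun hp => ⟨E + 1, R, ?_⟩) (fun hp => ⟨E, R + 1, ?_⟩)
      · refine ⟨by omega, by push_cast; linarith, expand_strictMono i hmono, ?_, ?_⟩
        · rw [pow_succ]
          linarith [expand_sub_expand_le i hmono.le]
        · linarith [expand_le_add_one i q, (R.cast_nonneg : (0 : ℝ) ≤ R)]
      · refine ⟨by omega, by push_cast; linarith, expand_strictMono i hmono, ?_, ?_⟩
        · rw [expand_of_add_one_le hp, expand_of_add_one_le (hp.trans hmono.le)]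
          linarith
        · rw [expand_of_add_one_le (hp.trans hmono.le)]
          push_cast
          linarith

theorem le_length_of_prod_eq_alphaWord (m : ℕ) (L : List ThompsonF)
    (hL : ∀ a ∈ L, a ∈ Xset (m + 1) ∨ a⁻¹ ∈ Xset (m + 1))
    (hprod : L.prod = (alphaWord (2 * m + 1)).prod) : 4 * m + 1 ≤ L.length := by
  obtain ⟨η, hη, hsmall⟩ := exists_pos_mul_lt one_pos ((2 : ℝ) ^ (L.length + (2 * m + 1)))
  have hsmall' : ∀ k ≤ L.length + (2 * m + 1), 2 ^ k * η < 1 := fun k hk =>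
    (mul_le_mul_of_nonneg_right (pow_le_pow_right₀ one_le_two hk) hη.le).trans_lt hsmall
  obtain ⟨E, R, -, hsum, -, hgap, hval⟩ :=
    exists_stretch_bounds (m + 1) (lo := 2 - η) (hi := 2) (by linarith) (by push_cast; linarith)
      L hL (by rw [sub_sub_cancel]; exact hsmall' _ (by omega))
  have hα2 := rho_alphaWord_prod_apply (2 * m + 1) le_rfl (by simp)
  simp only [sub_zero, mul_zero] at hα2
  rw [hprod, toAdd_exponentSum_alphaWord_prod] at hsum
  rw [hprod, hα2] at hval
  rw [hprod, hα2, rho_alphaWord_prod_apply _ hη.le (hsmall' _ (by omega)).le] at hgap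
  simp only [sub_sub_cancel] at hgap
  have hE : 2 * m + 1 ≤ E :=
    (pow_le_pow_iff_right₀ one_lt_two).mp (le_of_mul_le_mul_right hgap hη)
  have hR : m < R + 1 := by
    push_cast at hval
    exact_mod_cast (by linarith : (m : ℝ) < R + 1)
  push_cast at hsum
  omega

end ThompsonF

theorem length_alpha (n : ℕ) (hn : 1 ≤ n) :
    ln n (((List.range (2 * n - 1)).map (fun i => (x (2 * n - 1 - i))⁻¹)).prod) = 4 * n - 3 := by
  obtain ⟨m, rfl⟩ : ∃ m, n = m + 1 := ⟨n - 1, by omega⟩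
  rw [show 2 * (m + 1) - 1 = 2 * m + 1 by omega, show 4 * (m + 1) - 3 = 4 * m + 1 by omega,
    ← ThompsonF.shortWord_length m]
  refine wordLength_eq_of_forall_le _ (ThompsonF.shortWord_mem m) (ThompsonF.shortWord_prod m) ?_
  intro L hL hprod
  rw [ThompsonF.shortWord_length]
  exact ThompsonF.le_length_of_prod_eq_alphaWord m L hL hprod
end
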